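/- arXiv:2503.04661 — 2 statements merged into one kernel-verified Lean document; each statement's English description precedes it below -/
import Mathlib

section
/- Two voters lying strictly within the same band (the open interval between two consecutive midpoints of pairs of party positions) have identical symmetric single-peaked preference orders over all parties. -/
theorem abs_sub_lt_abs_sub_iff {K : Type*} [Field K] [LinearOrder K] [IsStrictOrderedRing K]
    {a b v : K} :
    |v - a| < |v - b| ↔ a < b ∧ v < (a + b) / 2 ∨ b < a ∧ (a + b) / 2 < v := by
  have gap : (v - b) ^ 2 - (v - a) ^ 2 = 2 * (b - a) * ((a + b) / 2 - v) := by ring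
  rw [← sq_lt_sq, ← sub_pos, gap, mul_assoc, mul_pos_iff_of_pos_left two_pos, mul_pos_iff,
    sub_pos, sub_pos, sub_neg, sub_neg]

theorem lt_iff_lt_of_lt_iff_lt_of_ne {α : Type*} [LinearOrder α] {c v₁ v₂ : α}
    (h₁ : v₁ ≠ c) (h₂ : v₂ ≠ c) (h : v₁ < c ↔ v₂ < c) : c < v₁ ↔ c < v₂ := by
  rw [← not_le, ← not_le, le_iff_lt_or_eq, le_iff_lt_or_eq, h]
  simp only [h₁, h₂, or_false]

theorem ssp_same_band_same_preferences_general
    {m : ℕ} (p : Fin m → ℝ) (v1 v2 : ℝ)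
    (hband : ∀ i j : Fin m,
      v1 ≠ (p i + p j) / 2 ∧ v2 ≠ (p i + p j) / 2 ∧
        (v1 < (p i + p j) / 2 ↔ v2 < (p i + p j) / 2)) :
    ∀ i j : Fin m, i ≠ j →
      (|v1 - p i| < |v1 - p j| ↔ |v2 - p i| < |v2 - p j|) := by
  intro i j _
  obtain ⟨h₁, h₂, below_iff⟩ := hband i j
  have above_iff := lt_iff_lt_of_lt_iff_lt_of_ne h₁ h₂ below_iff
  rw [abs_sub_lt_abs_sub_iff, abs_sub_lt_abs_sub_iff, below_iff, above_iff]

/-- Two voters lying strictly within the same band (strictly on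
the same side of every divider `(p i + p j)/2`, and on no divider) have
identical symmetric single-peaked preference orders over all parties. -/
theorem ssp_same_band_same_preferences
    {m : ℕ} (p : Fin m → ℝ) (hp : Function.Injective p) (v1 v2 : ℝ)
    (hband : ∀ i j : Fin m,
      v1 ≠ (p i + p j) / 2 ∧ v2 ≠ (p i + p j) / 2 ∧
        (v1 < (p i + p j) / 2 ↔ v2 < (p i + p j) / 2)) :
    ∀ i j : Fin m, i ≠ j →
      (|v1 - p i| < |v1 - p j| ↔ |v2 - p i| < |v2 - p j|) :=
  ssp_same_band_same_preferences_general p v1 v2 hband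
end

section
/- Immunity of control-for-coalition by deleting coalition parties: under plurality, deleting any set of coalition parties can never increase the coalition's total number of votes. Formally, if K ⊆ C ∩ R and the favored coalition total is measured over C, then Σ_{p ∈ C} N(R \ K, p) ≤ Σ_{p ∈ C} N(R, p). -/
open scoped Classical

lemma sum_card_filter_eq {V P : Type*} [Fintype V] [DecidableEq P]
    (f : V → P) (C : Finset P) :
    ∑ p ∈ C, (Finset.univ.filter fun v => f v = p).card =
      (Finset.univ.filter fun v => f v ∈ C).card := by
  simp only [Finset.card_filter]
  rw [Finset.sum_comm]
  refine Finset.sum_congr rfl fun v _ => ?_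
  by_cases h : f v ∈ C <;> simp [h, Finset.sum_ite_eq' C (f v)]

/-- Immunity of control-for-coalition by deleting coalition
parties: deleting any set `K ⊆ C ∩ R` of running coalition parties (with
`R \ K` nonempty) can never increase the coalition's total number of
plurality votes. -/
theorem deleting_coalition_cannot_increase_coalition_votes
    {V P : Type*} [Fintype V] [DecidableEq P]
    (u : V → P → ℝ) (top : V → Finset P → P)
    (htop : ∀ v (R : Finset P), R.Nonempty →
      top v R ∈ R ∧ ∀ q ∈ R, q ≠ top v R → u v q < u v (top v R))
    (C R K : Finset P) (hK : K ⊆ C ∩ R) (hne : (R \ K).Nonempty) :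
    ∑ p ∈ C, (Finset.univ.filter fun v => top v (R \ K) = p).card ≤
      ∑ p ∈ C, (Finset.univ.filter fun v => top v R = p).card := by
  rw [sum_card_filter_eq, sum_card_filter_eq]
  apply Finset.card_le_card
  intro v hv
  simp only [Finset.mem_filter, Finset.mem_univ, true_and] at hv ⊢
  have hRne : R.Nonempty := hne.mono (Finset.sdiff_subset)
  obtain ⟨hmem, hmax⟩ := htop v R hRne
  obtain ⟨hmem', hmax'⟩ := htop v (R \ K) hne
  by_cases hk : top v R ∈ K
  · exact (Finset.mem_inter.mp (hK hk)).1
  · have htopR : top v R ∈ R \ K := Finset.mem_sdiff.mpr ⟨hmem, hk⟩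
    have : top v R = top v (R \ K) := by
      by_contra hne'
      have h1 := hmax' _ htopR hne'
      have h2 := hmax _ (Finset.mem_sdiff.mp hmem').1 (fun h => hne' h.symm)
      linarith
    rwa [this]
end
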